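/- arXiv:1106.0869 — 2 statements merged into one kernel-verified Lean document; each statement's English description precedes it below -/
import Mathlib

section
/- In the SIMO model, the fixed transmit power needed for outage ≤ P is nonincreasing in the number of receive antennas N: if Ω(N) is defined by γ(N, Ω(N))/Γ(N) = P for a fixed P ∈ (0,1), and ρ(N) = (exp(Rζ)−1)/Ω(N), then Ω(N) is strictly increasing in N, hence ρ(N) is strictly decreasing in N. -/
lemma ibp_aux (n : ℕ) (x : ℝ) :
    ∫ t in (0:ℝ)..x, t ^ (n+1) * Real.exp (-t)
      = (n+1) * (∫ t in (0:ℝ)..x, t ^ n * Real.exp (-t)) - x ^ (n+1) * Real.exp (-x) := by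
  have hcont : ∀ m : ℕ, Continuous (fun t : ℝ => t ^ m * Real.exp (-t)) := by
    intro m; continuity
  have hint : ∀ m : ℕ, IntervalIntegrable (fun t : ℝ => t ^ m * Real.exp (-t))
      MeasureTheory.volume 0 x := fun m => (hcont m).intervalIntegrable _ _
  have hderiv : ∀ t ∈ Set.uIcc (0:ℝ) x,
      HasDerivAt (fun t : ℝ => -(t ^ (n+1) * Real.exp (-t)))
        (t ^ (n+1) * Real.exp (-t) - (n+1) * (t ^ n * Real.exp (-t))) t := by
    intro t _
    have h1 : HasDerivAt (fun t : ℝ => t ^ (n+1)) ((n+1) * t ^ n) t := by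
      simpa using hasDerivAt_pow (n+1) t
    have h2 : HasDerivAt (fun t : ℝ => Real.exp (-t)) (-Real.exp (-t)) t := by
      simpa [Function.comp_def] using (Real.hasDerivAt_exp (-t)).comp t (hasDerivAt_neg t)
    have := (h1.mul h2).neg
    refine this.congr_deriv ?_
    ring
  have hintc : IntervalIntegrable
      (fun t : ℝ => t ^ (n+1) * Real.exp (-t) - (n+1) * (t ^ n * Real.exp (-t)))
      MeasureTheory.volume 0 x := (hint (n+1)).sub ((hint n).const_mul _)
  have key := intervalIntegral.integral_eq_sub_of_hasDerivAt hderiv hintc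
  rw [intervalIntegral.integral_sub (hint (n+1)) ((hint n).const_mul _),
    intervalIntegral.integral_const_mul] at key
  simp at key
  linarith [key]

lemma int_strict (n : ℕ) {a b : ℝ} (ha : 0 ≤ a) (hab : a < b) :
    (∫ t in (0:ℝ)..a, t ^ n * Real.exp (-t)) < ∫ t in (0:ℝ)..b, t ^ n * Real.exp (-t) := by
  have hcont : Continuous (fun t : ℝ => t ^ n * Real.exp (-t)) := by continuity
  have h1 : IntervalIntegrable (fun t : ℝ => t ^ n * Real.exp (-t)) MeasureTheory.volume 0 a :=
    hcont.intervalIntegrable _ _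
  have h2 : IntervalIntegrable (fun t : ℝ => t ^ n * Real.exp (-t)) MeasureTheory.volume a b :=
    hcont.intervalIntegrable _ _
  have hadd := intervalIntegral.integral_add_adjacent_intervals h1 h2
  have hpos : 0 < ∫ t in a..b, t ^ n * Real.exp (-t) := by
    apply intervalIntegral.intervalIntegral_pos_of_pos_on h2
    · intro t ht
      have : 0 < t := lt_of_le_of_lt ha ht.1
      positivity
    · exact hab
  linarith

theorem stmt_13 (P R ζ : ℝ) (hP : P ∈ Set.Ioo (0 : ℝ) 1) (hR : 0 < R) (hζ : 0 < ζ)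
    (Ω : ℕ → ℝ)
    (hΩpos : ∀ N, 1 ≤ N → 0 < Ω N)
    (hquant : ∀ N, 1 ≤ N →
      (∫ t in (0 : ℝ)..Ω N, t ^ (N - 1) * Real.exp (-t)) / Real.Gamma N = P) :
    ∀ N, 1 ≤ N → Ω N < Ω (N + 1) ∧
      (Real.exp (R * ζ) - 1) / Ω (N + 1) < (Real.exp (R * ζ) - 1) / Ω N := by
  intro N hN
  have hxpos := hΩpos (N+1) (by omega)
  have hypos := hΩpos N hN
  have key : Ω N < Ω (N+1) := by
    obtain ⟨n, rfl⟩ : ∃ n, N = n + 1 := ⟨N - 1, by omega⟩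
    have hx := hquant (n+1+1) (by omega)
    have hy := hquant (n+1) (by omega)
    simp only [Nat.add_sub_cancel] at hx hy
    have hΓpos : 0 < Real.Gamma ((n+1 : ℕ) : ℝ) := by
      apply Real.Gamma_pos_of_pos; positivity
    have hΓrec : Real.Gamma ((n+1+1 : ℕ) : ℝ) = ((n:ℝ)+1) * Real.Gamma ((n+1:ℕ) : ℝ) := by
      push_cast
      rw [show ((n:ℝ) + 1 + 1) = ((n:ℝ)+1) + 1 by ring, Real.Gamma_add_one (by positivity)]
    rw [ibp_aux n (Ω (n+1+1)), hΓrec] at hx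
    by_contra hcon
    push_neg at hcon
    have hmono : (∫ t in (0:ℝ)..Ω (n+1+1), t ^ n * Real.exp (-t))
        ≤ ∫ t in (0:ℝ)..Ω (n+1), t ^ n * Real.exp (-t) := by
      rcases eq_or_lt_of_le hcon with h | h
      · rw [h]
      · exact (int_strict n hxpos.le h).le
    have hc : 0 < Ω (n+1+1) ^ (n+1) * Real.exp (-Ω (n+1+1)) := by positivity
    have hn1 : (0:ℝ) < (n:ℝ) + 1 := by positivity
    have hIy : (∫ t in (0:ℝ)..Ω (n+1), t ^ n * Real.exp (-t))
        = P * Real.Gamma ((n+1:ℕ):ℝ) := by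
      field_simp at hy; push_cast at hy ⊢; linarith
    have hIx : ((n:ℝ)+1) * (∫ t in (0:ℝ)..Ω (n+1+1), t ^ n * Real.exp (-t))
        - Ω (n+1+1) ^ (n+1) * Real.exp (-Ω (n+1+1))
        = P * (((n:ℝ)+1) * Real.Gamma ((n+1:ℕ):ℝ)) := by
      field_simp at hx; push_cast at hx ⊢; linarith
    nlinarith [hmono, hc, hΓpos, hn1]
  refine ⟨key, ?_⟩
  have hexp : 0 < Real.exp (R * ζ) - 1 := by
    have : (1:ℝ) < Real.exp (R * ζ) := by
      rw [show (1:ℝ) = Real.exp 0 by simp]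
      exact Real.exp_lt_exp.mpr (by positivity)
    linarith
  exact div_lt_div_of_pos_left hexp hypos key
end

section
/- With α = (1/2)[1 + c + 1/ρ − √((1+c+1/ρ)² − 4c)] for c, ρ > 0, the asymptotic mean-rate function μ(ρ) = c·log(1 + ρ − ρα) + log(1 + cρ − ρα) − α is positive and strictly increasing in ρ on (0, ∞). -/
noncomputable def mpAlpha (c ρ : ℝ) : ℝ :=
  (1 + c + ρ⁻¹ - Real.sqrt ((1 + c + ρ⁻¹) ^ 2 - 4 * c)) / 2

noncomputable def mpMu (c ρ : ℝ) : ℝ :=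
  c * Real.log (1 + ρ - ρ * mpAlpha c ρ) + Real.log (1 + c * ρ - ρ * mpAlpha c ρ)
    - mpAlpha c ρ

section aux
variable {c ρ : ℝ}

lemma disc_pos (hc : 0 < c) (hρ : 0 < ρ) : 0 < (1 + c + ρ⁻¹) ^ 2 - 4 * c := by
  have h : 0 < ρ⁻¹ := inv_pos.2 hρ
  nlinarith [sq_nonneg (1 - c), sq_nonneg ρ⁻¹]

lemma alpha_quad (hc : 0 < c) (hρ : 0 < ρ) :
    (mpAlpha c ρ) ^ 2 - (1 + c + ρ⁻¹) * mpAlpha c ρ + c = 0 := by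
  have hs : Real.sqrt ((1 + c + ρ⁻¹) ^ 2 - 4 * c) ^ 2 = (1 + c + ρ⁻¹) ^ 2 - 4 * c :=
    Real.sq_sqrt (disc_pos hc hρ).le
  unfold mpAlpha
  nlinarith [hs]

lemma alpha_pos (hc : 0 < c) (hρ : 0 < ρ) : 0 < mpAlpha c ρ := by
  have h : 0 < ρ⁻¹ := inv_pos.2 hρ
  have hb : 0 < 1 + c + ρ⁻¹ := by linarith
  have hs : Real.sqrt ((1 + c + ρ⁻¹) ^ 2 - 4 * c) < 1 + c + ρ⁻¹ := by
    have := Real.sqrt_lt_sqrt (disc_pos hc hρ).le (show (1 + c + ρ⁻¹) ^ 2 - 4 * c < (1 + c + ρ⁻¹) ^ 2 by linarith)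
    rwa [Real.sqrt_sq hb.le] at this
  unfold mpAlpha
  linarith

lemma alpha_lt_one (hc : 0 < c) (hρ : 0 < ρ) : mpAlpha c ρ < 1 := by
  have h : 0 < ρ⁻¹ := inv_pos.2 hρ
  have hs : Real.sqrt ((1 + c + ρ⁻¹) ^ 2 - 4 * c) ^ 2 = (1 + c + ρ⁻¹) ^ 2 - 4 * c :=
    Real.sq_sqrt (disc_pos hc hρ).le
  have hs0 : 0 ≤ Real.sqrt ((1 + c + ρ⁻¹) ^ 2 - 4 * c) := Real.sqrt_nonneg _
  have key : (1 + c + ρ⁻¹) - 2 < Real.sqrt ((1 + c + ρ⁻¹) ^ 2 - 4 * c) := by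
    nlinarith [hs, hs0]
  unfold mpAlpha
  linarith

lemma alpha_lt_c (hc : 0 < c) (hρ : 0 < ρ) : mpAlpha c ρ < c := by
  have h : 0 < ρ⁻¹ := inv_pos.2 hρ
  have hs : Real.sqrt ((1 + c + ρ⁻¹) ^ 2 - 4 * c) ^ 2 = (1 + c + ρ⁻¹) ^ 2 - 4 * c :=
    Real.sq_sqrt (disc_pos hc hρ).le
  have hs0 : 0 ≤ Real.sqrt ((1 + c + ρ⁻¹) ^ 2 - 4 * c) := Real.sqrt_nonneg _
  have key : (1 + c + ρ⁻¹) - 2 * c < Real.sqrt ((1 + c + ρ⁻¹) ^ 2 - 4 * c) := by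
    nlinarith [hs, hs0, mul_pos hc h]
  unfold mpAlpha
  linarith

lemma sqrt_step (hc : 0 < c) {b₁ b₂ : ℝ} (hd1 : 0 < b₁ ^ 2 - 4 * c)
    (hd2 : 0 < b₂ ^ 2 - 4 * c) (hb2p : 0 < b₂) (hbb : b₂ < b₁) :
    (b₁ - Real.sqrt (b₁ ^ 2 - 4 * c)) / 2 < (b₂ - Real.sqrt (b₂ ^ 2 - 4 * c)) / 2 := by
  have hs1 : Real.sqrt (b₁ ^ 2 - 4 * c) ^ 2 = b₁ ^ 2 - 4 * c := Real.sq_sqrt hd1.le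
  have hs2 : Real.sqrt (b₂ ^ 2 - 4 * c) ^ 2 = b₂ ^ 2 - 4 * c := Real.sq_sqrt hd2.le
  have hs1p : 0 < Real.sqrt (b₁ ^ 2 - 4 * c) := Real.sqrt_pos.2 hd1
  have hs2p : 0 < Real.sqrt (b₂ ^ 2 - 4 * c) := Real.sqrt_pos.2 hd2
  have hsb1 : Real.sqrt (b₁ ^ 2 - 4 * c) < b₁ := by nlinarith
  have hsb2 : Real.sqrt (b₂ ^ 2 - 4 * c) < b₂ := by nlinarith
  have key : b₁ - b₂ < Real.sqrt (b₁ ^ 2 - 4 * c) - Real.sqrt (b₂ ^ 2 - 4 * c) := by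
    nlinarith [mul_pos (add_pos hs1p hs2p) (sub_pos.2 hbb)]
  linarith

lemma alpha_strictMono (hc : 0 < c) {ρ₁ ρ₂ : ℝ} (h1 : 0 < ρ₁) (h12 : ρ₁ < ρ₂) :
    mpAlpha c ρ₁ < mpAlpha c ρ₂ := by
  have h2 : 0 < ρ₂ := h1.trans h12
  have hbb : 1 + c + ρ₂⁻¹ < 1 + c + ρ₁⁻¹ := by
    have : ρ₂⁻¹ < ρ₁⁻¹ := (inv_lt_inv₀ h2 h1).mpr h12
    linarith
  have hb2p : 0 < 1 + c + ρ₂⁻¹ := by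
    have : 0 < ρ₂⁻¹ := inv_pos.2 h2
    linarith
  exact sqrt_step hc (disc_pos hc h1) (disc_pos hc h2) hb2p hbb

lemma idA (hc : 0 < c) (hρ : 0 < ρ) :
    1 + ρ - ρ * mpAlpha c ρ = c / (c - mpAlpha c ρ) := by
  have hq := alpha_quad hc hρ
  have hca : 0 < c - mpAlpha c ρ := sub_pos.2 (alpha_lt_c hc hρ)
  rw [eq_div_iff hca.ne']
  have hρ' : ρ ≠ 0 := hρ.ne'
  have hq' : ρ * mpAlpha c ρ ^ 2 - (ρ + c * ρ + 1) * mpAlpha c ρ + c * ρ = 0 := by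
    have h := congrArg (fun t => ρ * t) hq
    simp only [mul_zero] at h
    field_simp at h
    linarith
  linear_combination hq'

lemma idB (hc : 0 < c) (hρ : 0 < ρ) :
    1 + c * ρ - ρ * mpAlpha c ρ = 1 / (1 - mpAlpha c ρ) := by
  have hq := alpha_quad hc hρ
  have h1a : 0 < 1 - mpAlpha c ρ := sub_pos.2 (alpha_lt_one hc hρ)
  rw [eq_div_iff h1a.ne']
  have hρ' : ρ ≠ 0 := hρ.ne'
  have hq' : ρ * mpAlpha c ρ ^ 2 - (ρ + c * ρ + 1) * mpAlpha c ρ + c * ρ = 0 := by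
    have h := congrArg (fun t => ρ * t) hq
    simp only [mul_zero] at h
    field_simp at h
    linarith
  linear_combination hq'

end aux

noncomputable def mpG (c : ℝ) : ℝ → ℝ :=
  fun x => c * (Real.log c - Real.log (c - x)) - Real.log (1 - x) - x

lemma mu_eq {c ρ : ℝ} (hc : 0 < c) (hρ : 0 < ρ) : mpMu c ρ = mpG c (mpAlpha c ρ) := by
  have hca : 0 < c - mpAlpha c ρ := sub_pos.2 (alpha_lt_c hc hρ)
  have h1a : 0 < 1 - mpAlpha c ρ := sub_pos.2 (alpha_lt_one hc hρ)
  unfold mpMu mpG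
  rw [idA hc hρ, idB hc hρ, Real.log_div hc.ne' hca.ne', one_div, Real.log_inv]
  ring

lemma G_strictMono {c : ℝ} (hc : 0 < c) :
    StrictMonoOn (mpG c) (Set.Ico 0 (min 1 c)) := by
  have hm : 0 < min 1 c := lt_min one_pos hc
  apply strictMonoOn_of_deriv_pos (convex_Ico _ _)
  · unfold mpG
    apply ContinuousOn.sub
    apply ContinuousOn.sub
    · exact continuousOn_const.mul (continuousOn_const.sub
        ((continuousOn_const.sub continuousOn_id).log (fun x hx => by
          have : x < c := lt_of_lt_of_le hx.2 (min_le_right 1 c)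
          simp only [Set.mem_Ico] at hx ⊢
          intro h; rw [Pi.sub_apply, sub_eq_zero] at h; exact absurd h.symm this.ne)))
    · exact (continuousOn_const.sub continuousOn_id).log (fun x hx => by
        have : x < 1 := lt_of_lt_of_le hx.2 (min_le_left 1 c)
        intro h; rw [Pi.sub_apply, sub_eq_zero] at h; exact absurd h.symm this.ne)
    · exact continuousOn_id
  · intro x hx
    rw [interior_Ico] at hx
    have hx0 : 0 < x := hx.1
    have hx1 : x < 1 := lt_of_lt_of_le hx.2 (min_le_left 1 c)
    have hxc : x < c := lt_of_lt_of_le hx.2 (min_le_right 1 c)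
    have hca : 0 < c - x := sub_pos.2 hxc
    have h1a : 0 < 1 - x := sub_pos.2 hx1
    have hd : HasDerivAt (mpG c)
        (c * (0 - -1 / (c - x)) - -1 / (1 - x) - 1) x := by
      unfold mpG
      have hlog1 : HasDerivAt (fun x : ℝ => Real.log (c - x)) (-1 / (c - x)) x := by
        simpa using ((hasDerivAt_const x c).sub (hasDerivAt_id x)).log hca.ne'
      have hlog2 : HasDerivAt (fun x : ℝ => Real.log (1 - x)) (-1 / (1 - x)) x := by
        simpa using ((hasDerivAt_const x 1).sub (hasDerivAt_id x)).log h1a.ne'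
      exact ((((hasDerivAt_const x (Real.log c)).sub hlog1).const_mul c).sub
        hlog2).sub (hasDerivAt_id x)
    rw [hd.deriv]
    have h2 : (1 - x) * (1 - x)⁻¹ = 1 := mul_inv_cancel₀ h1a.ne'
    have h3 : 0 < c / (c - x) := div_pos hc hca
    have h4 : 1 < (1 - x)⁻¹ := by nlinarith
    have : c * (0 - -1 / (c - x)) - -1 / (1 - x) - 1
        = c / (c - x) + (1 - x)⁻¹ - 1 := by
      field_simp
      ring
    rw [this]
    linarith

theorem stmt_16 (c : ℝ) (hc : 0 < c) :
    (∀ ρ : ℝ, 0 < ρ → 0 < mpMu c ρ) ∧ StrictMonoOn (mpMu c) (Set.Ioi 0) := by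
  have hm : 0 < min 1 c := lt_min one_pos hc
  have hmem : ∀ ρ : ℝ, 0 < ρ → mpAlpha c ρ ∈ Set.Ico 0 (min 1 c) := fun ρ hρ =>
    ⟨(alpha_pos hc hρ).le, lt_min (alpha_lt_one hc hρ) (alpha_lt_c hc hρ)⟩
  have hG := G_strictMono hc
  constructor
  · intro ρ hρ
    rw [mu_eq hc hρ]
    have h0 : (0 : ℝ) ∈ Set.Ico 0 (min 1 c) := ⟨le_rfl, hm⟩
    have := hG h0 (hmem ρ hρ) (alpha_pos hc hρ)
    have hG0 : mpG c 0 = 0 := by simp [mpG]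
    linarith [this, hG0.symm ▸ this]
  · intro ρ₁ h₁ ρ₂ h₂ h12
    rw [Set.mem_Ioi] at h₁ h₂
    rw [mu_eq hc h₁, mu_eq hc h₂]
    exact hG (hmem ρ₁ h₁) (hmem ρ₂ h₂) (alpha_strictMono hc h₁ h12)
end
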